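/- arXiv:2510.16745 — 2 statements merged into one kernel-verified Lean document; each statement's English description precedes it below -/
import Mathlib

section
/- Let M ⊂ ℝⁿ be a nonempty closed convex set and let Π_M^V(x) denote the orthogonal projection of x onto M under the inner product ⟨x,y⟩_V = xᵀVy induced by a symmetric positive definite matrix V. If V_k is a sequence of symmetric positive definite matrices converging to a symmetric positive definite matrix V, then for every x ∈ ℝⁿ, Π_M^{V_k}(x) → Π_M^V(x). -/
open Matrix Filter

/-- The quadratic form `v ↦ vᵀ V v`. -/
def quadForm {n : ℕ} (V : Matrix (Fin n) (Fin n) ℝ) (v : Fin n → ℝ) : ℝ :=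
  v ⬝ᵥ V.mulVec v

/-- `p` is the orthogonal projection of `x` onto `M` under the inner product induced by `V`. -/
def IsProjOn {n : ℕ} (V : Matrix (Fin n) (Fin n) ℝ) (M : Set (Fin n → ℝ))
    (x p : Fin n → ℝ) : Prop :=
  p ∈ M ∧ ∀ m ∈ M, quadForm V (x - p) ≤ quadForm V (x - m)

lemma quadForm_cont {n : ℕ} :
    Continuous fun pr : Matrix (Fin n) (Fin n) ℝ × (Fin n → ℝ) => quadForm pr.1 pr.2 := by
  have h : (fun pr : Matrix (Fin n) (Fin n) ℝ × (Fin n → ℝ) => quadForm pr.1 pr.2)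
      = fun pr => ∑ i, pr.2 i * ∑ j, pr.1 i j * pr.2 j := by
    funext pr; simp [quadForm, dotProduct, Matrix.mulVec]
  rw [h]
  refine continuous_finset_sum _ fun i _ => ?_
  exact ((continuous_apply i).comp continuous_snd).mul <| continuous_finset_sum _ fun j _ =>
    (((continuous_apply j).comp ((continuous_apply i).comp continuous_fst)).mul
      ((continuous_apply j).comp continuous_snd))

set_option maxHeartbeats 1000000 in
lemma tendsto_quadForm {n : ℕ} {A : ℕ → Matrix (Fin n) (Fin n) ℝ} {B : Matrix (Fin n) (Fin n) ℝ}
    (hA : Tendsto A atTop (nhds B)) {v : ℕ → Fin n → ℝ} {w : Fin n → ℝ}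
    (hv : Tendsto v atTop (nhds w)) :
    Tendsto (fun j => quadForm (A j) (v j)) atTop (nhds (quadForm B w)) := by
  have h1 : Tendsto (fun j => (A j, v j)) atTop (nhds (B, w)) := hA.prodMk_nhds hv
  exact (quadForm_cont.tendsto (B, w)).comp h1

lemma quadForm_pos {n : ℕ} {V : Matrix (Fin n) (Fin n) ℝ} (hV : V.PosDef)
    {v : Fin n → ℝ} (hv : v ≠ 0) : 0 < quadForm V v := by
  simpa [quadForm] using hV.dotProduct_mulVec_pos hv

lemma quadForm_smul {n : ℕ} (V : Matrix (Fin n) (Fin n) ℝ) (c : ℝ) (v : Fin n → ℝ) :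
    quadForm V (c • v) = c ^ 2 * quadForm V v := by
  simp [quadForm, Matrix.mulVec_smul, smul_dotProduct, dotProduct_smul, smul_eq_mul]
  ring

lemma quadForm_parallelogram {n : ℕ} (V : Matrix (Fin n) (Fin n) ℝ) (a b : Fin n → ℝ) :
    quadForm V ((1/2 : ℝ) • (a + b)) + quadForm V ((1/2 : ℝ) • (a - b))
      = (quadForm V a + quadForm V b) / 2 := by
  rw [quadForm_smul, quadForm_smul]
  simp only [quadForm, Matrix.mulVec_add, Matrix.mulVec_sub, dotProduct_add, dotProduct_sub,
    add_dotProduct, sub_dotProduct]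
  ring

lemma isProjOn_unique {n : ℕ} {V : Matrix (Fin n) (Fin n) ℝ} (hV : V.PosDef)
    {M : Set (Fin n → ℝ)} (hMcv : Convex ℝ M) {x p₁ p₂ : Fin n → ℝ}
    (h₁ : IsProjOn V M x p₁) (h₂ : IsProjOn V M x p₂) : p₁ = p₂ := by
  by_contra hne
  have hm : (1/2 : ℝ) • p₁ + (1/2 : ℝ) • p₂ ∈ M :=
    hMcv h₁.1 h₂.1 (by norm_num) (by norm_num) (by norm_num)
  have hxm : x - ((1/2 : ℝ) • p₁ + (1/2 : ℝ) • p₂) = (1/2 : ℝ) • ((x - p₁) + (x - p₂)) := by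
    funext i; simp [Pi.smul_apply, smul_eq_mul]; ring
  have hdiff : (x - p₁) - (x - p₂) = p₂ - p₁ := by abel
  have hpar := quadForm_parallelogram V (x - p₁) (x - p₂)
  rw [hdiff] at hpar
  have hd : quadForm V (x - p₁) = quadForm V (x - p₂) :=
    le_antisymm (h₁.2 _ h₂.1) (h₂.2 _ h₁.1)
  have hle := h₁.2 _ hm
  rw [hxm] at hle
  have hpos : 0 < quadForm V ((1/2 : ℝ) • (p₂ - p₁)) := by
    refine quadForm_pos hV ?_
    intro h0
    apply hne
    have h1 : p₂ - p₁ = 0 := by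
      have := congrArg (fun v => (2 : ℝ) • v) h0
      simpa [smul_smul] using this
    funext i; have := congrFun h1 i; simp at this; linarith [this]
  linarith

theorem projection_continuity_in_metric
    {n : ℕ} (M : Set (Fin n → ℝ)) (hMne : M.Nonempty) (hMcl : IsClosed M)
    (hMcv : Convex ℝ M)
    (Vk : ℕ → Matrix (Fin n) (Fin n) ℝ) (hVk : ∀ k, (Vk k).PosDef)
    (V : Matrix (Fin n) (Fin n) ℝ) (hV : V.PosDef)
    (hVconv : Tendsto Vk atTop (nhds V))
    (x : Fin n → ℝ)
    (p : ℕ → Fin n → ℝ) (hp : ∀ k, IsProjOn (Vk k) M x (p k))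
    (q : Fin n → ℝ) (hq : IsProjOn V M x q) :
    Tendsto p atTop (nhds q) := by
  rcases Nat.eq_zero_or_pos n with hn | hn
  · subst hn
    haveI : Subsingleton (Fin 0 → ℝ) := ⟨fun a b => funext fun i => i.elim0⟩
    have hpq : p = fun _ => q := funext fun k => Subsingleton.elim _ _
    rw [hpq]
    exact tendsto_const_nhds
  -- Uniform coercivity: find c > 0 with c * ‖v‖² ≤ quadForm A v for all A in the family.
  haveI : Nonempty (Fin n) := ⟨⟨0, hn⟩⟩
  set K : Set (Matrix (Fin n) (Fin n) ℝ) := insert V (Set.range Vk) with hK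
  have hKcomp : IsCompact K := hVconv.isCompact_insert_range
  have hSph : (Metric.sphere (0 : Fin n → ℝ) 1).Nonempty :=
    NormedSpace.sphere_nonempty.mpr (by norm_num)
  have hKS : IsCompact (K ×ˢ Metric.sphere (0 : Fin n → ℝ) 1) :=
    hKcomp.prod (isCompact_sphere 0 1)
  have hKSne : (K ×ˢ Metric.sphere (0 : Fin n → ℝ) 1).Nonempty :=
    ⟨(V, hSph.choose), Set.mem_insert _ _, hSph.choose_spec⟩
  obtain ⟨⟨A₀, v₀⟩, hA₀mem, hmin⟩ :=
    hKS.exists_isMinOn hKSne quadForm_cont.continuousOn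
  set c : ℝ := quadForm A₀ v₀ with hc
  have hA₀pos : A₀.PosDef := by
    rcases hA₀mem.1 with h | ⟨k, hk⟩
    · have h' : A₀ = V := h
      rwa [h']
    · have h' : Vk k = A₀ := hk
      rw [← h']; exact hVk k
  have hv₀ne : v₀ ≠ 0 := by
    have h1 : ‖v₀‖ = 1 := by simpa using hA₀mem.2
    intro h0; rw [h0] at h1; simp at h1
  have hcpos : 0 < c := quadForm_pos hA₀pos hv₀ne
  have hcoer : ∀ A ∈ K, ∀ v : Fin n → ℝ, c * ‖v‖ ^ 2 ≤ quadForm A v := by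
    intro A hA v
    rcases eq_or_ne v 0 with rfl | hv
    · simp [quadForm]
    · have hnv : ‖v‖ ≠ 0 := norm_ne_zero_iff.mpr hv
      have hu : ‖v‖⁻¹ • v ∈ Metric.sphere (0 : Fin n → ℝ) 1 := by
        simp [norm_smul, abs_of_nonneg (inv_nonneg.mpr (norm_nonneg v)),
          inv_mul_cancel₀ hnv]
      have hmem : (A, ‖v‖⁻¹ • v) ∈ K ×ˢ Metric.sphere (0 : Fin n → ℝ) 1 := ⟨hA, hu⟩
      have h1 : c ≤ quadForm A (‖v‖⁻¹ • v) := hmin hmem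
      have h2 : quadForm A v = ‖v‖ ^ 2 * quadForm A (‖v‖⁻¹ • v) := by
        rw [← quadForm_smul, smul_smul, mul_inv_cancel₀ hnv, one_smul]
      rw [h2]
      have hnn : (0:ℝ) ≤ ‖v‖ ^ 2 := sq_nonneg _
      nlinarith
  -- Uniform bound on the sequence p
  obtain ⟨m₀, hm₀⟩ := hMne
  have hDtend : Tendsto (fun k => quadForm (Vk k) (x - m₀)) atTop
      (nhds (quadForm V (x - m₀))) :=
    tendsto_quadForm hVconv tendsto_const_nhds
  obtain ⟨D, hD⟩ := hDtend.bddAbove_range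
  have hDbound : ∀ k, quadForm (Vk k) (x - m₀) ≤ D := fun k =>
    hD (Set.mem_range_self k)
  set R : ℝ := Real.sqrt (D / c) with hR
  have hball : ∀ k, p k ∈ Metric.closedBall x R := by
    intro k
    have h1 : c * ‖x - p k‖ ^ 2 ≤ quadForm (Vk k) (x - p k) :=
      hcoer _ (Set.mem_insert_iff.mpr (Or.inr ⟨k, rfl⟩)) _
    have h2 : quadForm (Vk k) (x - p k) ≤ quadForm (Vk k) (x - m₀) := (hp k).2 _ hm₀
    have h3 : ‖x - p k‖ ^ 2 ≤ D / c := by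
      rw [le_div_iff₀ hcpos]
      nlinarith [hDbound k]
    have h4 : (0:ℝ) ≤ D / c := le_trans (sq_nonneg _) h3
    have h5 : ‖x - p k‖ ≤ R := (Real.le_sqrt (norm_nonneg _) h4).mpr h3
    rw [Metric.mem_closedBall, dist_eq_norm, ← norm_neg]
    simpa [neg_sub] using h5
  -- Subsequence argument
  apply tendsto_of_subseq_tendsto
  intro ns hns
  obtain ⟨b, _, φ, hφmono, hφtend⟩ :=
    tendsto_subseq_of_bounded (Metric.isBounded_closedBall (x := x) (r := R))
      (fun j => hball (ns j))
  refine ⟨φ, ?_⟩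
  have hφtend' : Tendsto (fun j => p (ns (φ j))) atTop (nhds b) := hφtend
  have hVtend : Tendsto (fun j => Vk (ns (φ j))) atTop (nhds V) :=
    hVconv.comp (hns.comp hφmono.tendsto_atTop)
  have hbM : b ∈ M := hMcl.mem_of_tendsto hφtend'
    (Filter.Eventually.of_forall fun j => (hp _).1)
  have hbproj : IsProjOn V M x b := by
    refine ⟨hbM, fun m hm => ?_⟩
    refine le_of_tendsto_of_tendsto'
      (tendsto_quadForm hVtend (tendsto_const_nhds.sub hφtend'))
      (tendsto_quadForm hVtend tendsto_const_nhds) (fun j => ?_)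
    exact (hp (ns (φ j))).2 m hm
  have hbq : b = q := isProjOn_unique hV hMcv hbproj hq
  rwa [hbq] at hφtend'
end

section
/- Let M ⊂ ℝⁿ be a nonempty closed convex set. The map (x, V) ↦ Π_M^V(x), where V ranges over symmetric positive definite matrices and Π_M^V is the projection onto M in the V-inner product, is jointly continuous on ℝⁿ × S^n_{++}. -/
open Matrix

namespace ProjAux
variable {n : ℕ}

lemma dot_symm (V : Matrix (Fin n) (Fin n) ℝ) (hV : Vᵀ = V) (u w : Fin n → ℝ) :
    u ⬝ᵥ V.mulVec w = w ⬝ᵥ V.mulVec u := by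
  rw [Matrix.dotProduct_mulVec, ← Matrix.mulVec_transpose, hV, dotProduct_comm]

lemma quad_sub_smul (V : Matrix (Fin n) (Fin n) ℝ) (hV : Vᵀ = V) (u w : Fin n → ℝ) (t : ℝ) :
    quadForm V (u - t • w) =
      quadForm V u - 2*t*(u ⬝ᵥ V.mulVec w) + t^2 * quadForm V w := by
  have h := dot_symm V hV w u
  simp only [quadForm, Matrix.mulVec_sub, dotProduct_sub, sub_dotProduct,
    Matrix.mulVec_smul, dotProduct_smul, smul_dotProduct, smul_eq_mul] at *
  ring_nf
  rw [h]
  ring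

lemma quad_smul (V : Matrix (Fin n) (Fin n) ℝ) (s : ℝ) (w : Fin n → ℝ) :
    quadForm V (s • w) = s^2 * quadForm V w := by
  simp only [quadForm, Matrix.mulVec_smul, dotProduct_smul, smul_dotProduct,
    smul_eq_mul]
  ring

lemma transpose_eq_of_posdef {V : Matrix (Fin n) (Fin n) ℝ} (hV : V.PosDef) : Vᵀ = V := by
  have := hV.1
  rwa [Matrix.IsHermitian, Matrix.conjTranspose_eq_transpose_of_trivial] at this

lemma varineq {M : Set (Fin n → ℝ)} (hMcv : Convex ℝ M)
    {V : Matrix (Fin n) (Fin n) ℝ} (hV : V.PosDef)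
    {x p : Fin n → ℝ} (hp : IsProjOn V M x p) :
    ∀ m ∈ M, (x - p) ⬝ᵥ V.mulVec (m - p) ≤ 0 := by
  intro m hm
  set u := x - p
  set w := m - p
  set c := u ⬝ᵥ V.mulVec w with hc
  set K := quadForm V w with hK
  have key : ∀ t : ℝ, 0 < t → t ≤ 1 → 2 * c ≤ t * K := by
    intro t ht ht1
    have hmem : p + t • w ∈ M := by
      have := hMcv hp.1 hm (by linarith : (0:ℝ) ≤ 1 - t) ht.le (by ring)
      convert this using 1
      simp only [w]
      module
    have hle := hp.2 _ hmem
    have hx : x - (p + t • w) = u - t • w := by simp only [u]; abel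
    rw [hx, quad_sub_smul V (transpose_eq_of_posdef hV) u w t] at hle
    nlinarith
  by_contra hcpos
  push_neg at hcpos
  have h1 := key 1 one_pos le_rfl
  have hKpos : 0 < K := by nlinarith
  have h2 := key (c / K) (by positivity) (by rw [div_le_one hKpos]; nlinarith)
  rw [div_mul_cancel₀ _ hKpos.ne'] at h2
  linarith

lemma quad_continuous (V : Matrix (Fin n) (Fin n) ℝ) : Continuous (quadForm V) := by
  unfold quadForm dotProduct mulVec dotProduct
  fun_prop

lemma coercive {V : Matrix (Fin n) (Fin n) ℝ} (hV : V.PosDef) :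
    ∃ c > 0, ∀ v : Fin n → ℝ, c * ‖v‖^2 ≤ quadForm V v := by
  by_cases hn : ∃ v : Fin n → ℝ, v ≠ 0
  · obtain ⟨v₀, hv₀⟩ := hn
    have hsph : (Metric.sphere (0 : Fin n → ℝ) 1).Nonempty :=
      ⟨‖v₀‖⁻¹ • v₀, by simp [norm_smul, inv_mul_cancel₀ (norm_ne_zero_iff.2 hv₀)]⟩
    obtain ⟨w₀, hw₀, hmin⟩ := (isCompact_sphere (0:Fin n → ℝ) 1).exists_isMinOn hsph
      (quad_continuous V).continuousOn
    have hw₀ne : w₀ ≠ 0 := by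
      intro h
      rw [Metric.mem_sphere, dist_zero_right, h, norm_zero] at hw₀
      norm_num at hw₀
    have hc : 0 < quadForm V w₀ := by
      have := hV.dotProduct_mulVec_pos hw₀ne
      simpa [quadForm] using this
    refine ⟨quadForm V w₀, hc, fun v => ?_⟩
    by_cases hv : v = 0
    · simp [hv, quadForm]
    · have hnv : (0:ℝ) < ‖v‖ := norm_pos_iff.2 hv
      have hmem : ‖v‖⁻¹ • v ∈ Metric.sphere (0 : Fin n → ℝ) 1 := by
        simp [norm_smul, inv_mul_cancel₀ hnv.ne']
      have hle := hmin hmem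
      have hscale : quadForm V v = ‖v‖^2 * quadForm V (‖v‖⁻¹ • v) := by
        rw [quad_smul]
        field_simp
      rw [hscale]
      have hle' : quadForm V w₀ ≤ quadForm V (‖v‖⁻¹ • v) := hle
      nlinarith [hle', sq_nonneg ‖v‖]
  · push_neg at hn
    refine ⟨1, one_pos, fun v => ?_⟩
    simp [hn v, quadForm]

/-- Sum of absolute values of the entries of a matrix. -/
def Ksum (A : Matrix (Fin n) (Fin n) ℝ) : ℝ := ∑ i, ∑ j, |A i j|

lemma Ksum_nonneg (A : Matrix (Fin n) (Fin n) ℝ) : 0 ≤ Ksum A := by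
  apply Finset.sum_nonneg; intro i _; apply Finset.sum_nonneg; intro j _; positivity

lemma Ksum_neg (A : Matrix (Fin n) (Fin n) ℝ) : Ksum (-A) = Ksum A := by
  unfold Ksum
  congr 1; ext i; congr 1; ext j
  simp [abs_neg]

lemma abs_dot_le (A : Matrix (Fin n) (Fin n) ℝ) (u w : Fin n → ℝ) :
    |u ⬝ᵥ A.mulVec w| ≤ Ksum A * ‖u‖ * ‖w‖ := by
  calc |u ⬝ᵥ A.mulVec w| ≤ ∑ i, |u i * (A.mulVec w) i| :=
        Finset.abs_sum_le_sum_abs _ _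
    _ ≤ ∑ i, ∑ j, |A i j| * ‖u‖ * ‖w‖ := by
        apply Finset.sum_le_sum
        intro i _
        rw [abs_mul]
        have h1 : |(A.mulVec w) i| ≤ ∑ j, |A i j| * ‖w‖ := by
          simp only [Matrix.mulVec, dotProduct]
          refine le_trans (Finset.abs_sum_le_sum_abs _ _) (Finset.sum_le_sum fun j _ => ?_)
          rw [abs_mul]
          exact mul_le_mul_of_nonneg_left (norm_le_pi_norm w j) (abs_nonneg _)
        calc |u i| * |(A.mulVec w) i| ≤ ‖u‖ * ∑ j, |A i j| * ‖w‖ := by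
              apply mul_le_mul (norm_le_pi_norm u i) h1 (abs_nonneg _) (norm_nonneg u)
          _ = ∑ j, |A i j| * ‖u‖ * ‖w‖ := by
              rw [Finset.mul_sum]; congr 1; ext j; ring
    _ = Ksum A * ‖u‖ * ‖w‖ := by
        simp only [Ksum, Finset.sum_mul]

lemma Ksum_continuous : Continuous (Ksum : Matrix (Fin n) (Fin n) ℝ → ℝ) := by
  unfold Ksum
  apply continuous_finset_sum; intro i _
  apply continuous_finset_sum; intro j _
  exact continuous_abs.comp ((continuous_apply j).comp (continuous_apply i))

lemma abstract_est (c x m B C0 KW Qvq Qwq Qwm Qvm Dq Dm : ℝ)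
    (hcoer1 : c * (x*x) ≤ Qvq) (e2 : Qwq = Qvq + Dq) (e1 : Qwq ≤ Qwm)
    (e3 : Qwm = Qvm + Dm) (hb3 : Qvm ≤ C0 * m * m)
    (hC0 : 0 ≤ C0) (hKW : 0 ≤ KW) (hKWhalf : KW ≤ c/2)
    (hm : 0 ≤ m) (hmB : m ≤ B)
    (habs2 : Dm ≤ KW * m * m)
    (habs1 : -(KW * x * x) ≤ Dq) :
    c/2 * (x*x) ≤ (C0 + c/2)*(B*B) := by
  have h1 : m * m ≤ B * B := mul_self_le_mul_self hm hmB
  nlinarith [mul_le_mul_of_nonneg_left h1 hC0,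
    mul_le_mul hKWhalf h1 (mul_self_nonneg m) (by linarith),
    mul_le_mul_of_nonneg_right hKWhalf (mul_self_nonneg x)]

lemma abstract_final (c eps C0 S0 KW nyx nd : ℝ)
    (hc : 0 < c) (heps : 0 < eps) (hC0 : 0 ≤ C0) (hS0 : 0 ≤ S0) (hKW : 0 ≤ KW)
    (hnd : 0 < nd) (hnyx : 0 ≤ nyx)
    (hmain : c * (nd * nd) ≤ C0 * nyx * nd + KW * S0 * nd)
    (h1 : nyx < c*eps/(2*(C0+1)))
    (h2 : KW < c*eps/(2*(S0+1))) :
    nd < eps := by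
  have hdiv : c * nd ≤ C0 * nyx + KW * S0 := by
    have h' : (c * nd) * nd ≤ (C0 * nyx + KW * S0) * nd := by
      calc (c * nd) * nd = c * (nd * nd) := by ring
        _ ≤ C0 * nyx * nd + KW * S0 * nd := hmain
        _ = (C0 * nyx + KW * S0) * nd := by ring
    exact le_of_mul_le_mul_right h' hnd
  have e1 : C0 * nyx ≤ C0 * (c*eps/(2*(C0+1))) :=
    mul_le_mul_of_nonneg_left h1.le hC0
  have e2 : KW * S0 ≤ (c*eps/(2*(S0+1))) * S0 :=
    mul_le_mul_of_nonneg_right h2.le hS0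
  have e3 : C0 * (c*eps/(2*(C0+1))) < c*eps/2 := by
    rw [mul_div_assoc', div_lt_div_iff₀ (by positivity) (by norm_num)]
    nlinarith [mul_pos hc heps]
  have e4 : (c*eps/(2*(S0+1))) * S0 < c*eps/2 := by
    rw [div_mul_eq_mul_div, div_lt_div_iff₀ (by positivity) (by norm_num)]
    nlinarith [mul_pos hc heps]
  have hfin : c * nd < c * eps := by linarith
  exact (mul_lt_mul_iff_right₀ hc).1 hfin

lemma quad_split (V W : Matrix (Fin n) (Fin n) ℝ) (v : Fin n → ℝ) :
    quadForm W v = quadForm V v + v ⬝ᵥ (W - V).mulVec v := by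
  simp only [quadForm, Matrix.sub_mulVec, dotProduct_sub]
  ring

lemma key_identity (V W : Matrix (Fin n) (Fin n) ℝ) (x₀ p₀ y q : Fin n → ℝ) :
    quadForm V (q - p₀) =
      (x₀ - p₀) ⬝ᵥ V.mulVec (q - p₀) + (y - q) ⬝ᵥ W.mulVec (p₀ - q)
        + (y - x₀) ⬝ᵥ V.mulVec (q - p₀) + (q - y) ⬝ᵥ (V - W).mulVec (q - p₀) := by
  simp only [quadForm, Matrix.sub_mulVec, Matrix.mulVec_sub, dotProduct_sub,
    sub_dotProduct]
  ring

end ProjAux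

open ProjAux
theorem projection_joint_continuity
    {n : ℕ} (M : Set (Fin n → ℝ)) (hMne : M.Nonempty) (hMcl : IsClosed M)
    (hMcv : Convex ℝ M)
    (f : (Fin n → ℝ) × Matrix (Fin n) (Fin n) ℝ → Fin n → ℝ)
    (hf : ∀ x : Fin n → ℝ, ∀ V : Matrix (Fin n) (Fin n) ℝ, V.PosDef →
        IsProjOn V M x (f (x, V))) :
    ContinuousOn f {p : (Fin n → ℝ) × Matrix (Fin n) (Fin n) ℝ | p.2.PosDef} := by
  rintro ⟨x₀, V₀⟩ hV₀
  have hV₀ : V₀.PosDef := hV₀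
  obtain ⟨m₀, hm₀⟩ := hMne
  obtain ⟨c, hc, hcoer⟩ := coercive hV₀
  set p₀ := f (x₀, V₀) with hp₀def
  have hp₀ := hf x₀ V₀ hV₀
  set C₀ := Ksum V₀ with hC₀def
  have hC₀ : 0 ≤ C₀ := Ksum_nonneg V₀
  refine Metric.tendsto_nhds.2 fun ε hε => ?_
  -- constants
  set B : ℝ := ‖x₀ - m₀‖ + 1 with hBdef
  have hB : 0 < B := by positivity
  set S₀ : ℝ := Real.sqrt (2*(C₀ + c/2)*B^2/c) with hS₀def
  have hS₀ : 0 ≤ S₀ := Real.sqrt_nonneg _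
  set δ₁ : ℝ := min 1 (c*ε/(2*(C₀+1))) with hδ₁def
  set δ₂ : ℝ := min (c/2) (c*ε/(2*(S₀+1))) with hδ₂def
  have hδ₁ : 0 < δ₁ := lt_min one_pos (by positivity)
  have hδ₂ : 0 < δ₂ := lt_min (by positivity) (by positivity)
  -- the neighborhood
  have hcont1 : Continuous fun z : (Fin n → ℝ) × Matrix (Fin n) (Fin n) ℝ => ‖z.1 - x₀‖ :=
    (continuous_fst.sub continuous_const).norm
  have hcont2 : Continuous fun z : (Fin n → ℝ) × Matrix (Fin n) (Fin n) ℝ =>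
      Ksum (z.2 - V₀) := Ksum_continuous.comp (continuous_snd.sub continuous_const)
  have hUopen : IsOpen {z : (Fin n → ℝ) × Matrix (Fin n) (Fin n) ℝ |
      ‖z.1 - x₀‖ < δ₁ ∧ Ksum (z.2 - V₀) < δ₂} :=
    (isOpen_lt hcont1 continuous_const).inter (isOpen_lt hcont2 continuous_const)
  have hmemU : (x₀, V₀) ∈ {z : (Fin n → ℝ) × Matrix (Fin n) (Fin n) ℝ |
      ‖z.1 - x₀‖ < δ₁ ∧ Ksum (z.2 - V₀) < δ₂} := by
    constructor
    · simpa using hδ₁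
    · simpa [Ksum] using hδ₂
  filter_upwards [mem_nhdsWithin_of_mem_nhds (hUopen.mem_nhds hmemU),
    self_mem_nhdsWithin] with z hzU hzS
  obtain ⟨y, W⟩ := z
  have hW : W.PosDef := hzS
  obtain ⟨hz1, hz2⟩ := hzU
  simp only at hz1 hz2
  set q := f (y, W) with hqdef
  have hq := hf y W hW
  have hKW : 0 ≤ Ksum (W - V₀) := Ksum_nonneg _
  -- Step 1 : ‖y - q‖ ≤ S₀
  have hyq : ‖y - q‖ ≤ S₀ := by
    have e1 : quadForm W (y - q) ≤ quadForm W (y - m₀) := hq.2 m₀ hm₀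
    have e2 : quadForm W (y - q) = quadForm V₀ (y - q) + (y-q) ⬝ᵥ (W - V₀).mulVec (y-q) :=
      quad_split V₀ W (y - q)
    have e3 : quadForm W (y - m₀) = quadForm V₀ (y - m₀) + (y-m₀) ⬝ᵥ (W - V₀).mulVec (y-m₀) :=
      quad_split V₀ W (y - m₀)
    have hb1 : |(y-q) ⬝ᵥ (W - V₀).mulVec (y-q)| ≤ Ksum (W - V₀) * ‖y-q‖ * ‖y-q‖ :=
      abs_dot_le _ _ _
    have hb2 : |(y-m₀) ⬝ᵥ (W - V₀).mulVec (y-m₀)| ≤ Ksum (W - V₀) * ‖y-m₀‖ * ‖y-m₀‖ :=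
      abs_dot_le _ _ _
    have hb3 : quadForm V₀ (y - m₀) ≤ C₀ * ‖y-m₀‖ * ‖y-m₀‖ :=
      le_trans (le_abs_self _) (abs_dot_le V₀ _ _)
    have hym : ‖y - m₀‖ ≤ B := by
      have : y - m₀ = (y - x₀) + (x₀ - m₀) := by abel
      rw [this]
      calc ‖(y - x₀) + (x₀ - m₀)‖ ≤ ‖y - x₀‖ + ‖x₀ - m₀‖ := norm_add_le _ _
        _ ≤ B := by rw [hBdef]; have := le_of_lt hz1; have h1 : δ₁ ≤ 1 := min_le_left _ _; linarith
    have hKWhalf : Ksum (W - V₀) ≤ c/2 := le_trans hz2.le (min_le_left _ _)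
    have hcoer1 := hcoer (y - q)
    -- (c/2) ‖y-q‖² ≤ (C₀ + c/2) * B²
    have habs1 := (abs_le.1 hb1).1
    have habs2 := (abs_le.1 hb2).2
    have hnq : 0 ≤ ‖y - q‖ := norm_nonneg _
    have hnm : 0 ≤ ‖y - m₀‖ := norm_nonneg _
    rw [pow_two] at hcoer1
    have hsq : c/2 * (‖y - q‖ * ‖y - q‖) ≤ (C₀ + c/2) * (B * B) :=
      abstract_est c ‖y - q‖ ‖y - m₀‖ B C₀ (Ksum (W - V₀))
        (quadForm V₀ (y - q)) (quadForm W (y - q)) (quadForm W (y - m₀))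
        (quadForm V₀ (y - m₀)) ((y - q) ⬝ᵥ (W - V₀).mulVec (y - q))
        ((y - m₀) ⬝ᵥ (W - V₀).mulVec (y - m₀))
        hcoer1 e2 e1 e3 hb3 hC₀ hKW hKWhalf hnm hym habs2 habs1
    have hsq2 : ‖y - q‖^2 ≤ 2*(C₀ + c/2)*B^2/c := by
      rw [le_div_iff₀ hc, pow_two, pow_two]
      linarith
    calc ‖y - q‖ = Real.sqrt (‖y - q‖^2) := (Real.sqrt_sq (norm_nonneg _)).symm
      _ ≤ S₀ := Real.sqrt_le_sqrt hsq2
  -- Step 2 : main estimate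
  have VI1 : (x₀ - p₀) ⬝ᵥ V₀.mulVec (q - p₀) ≤ 0 := varineq hMcv hV₀ hp₀ q hq.1
  have VI2 : (y - q) ⬝ᵥ W.mulVec (p₀ - q) ≤ 0 := varineq hMcv hW hq p₀ hp₀.1
  have hid := key_identity V₀ W x₀ p₀ y q
  have hb4 : |(y - x₀) ⬝ᵥ V₀.mulVec (q - p₀)| ≤ C₀ * ‖y - x₀‖ * ‖q - p₀‖ := abs_dot_le _ _ _
  have hb5 : |(q - y) ⬝ᵥ (V₀ - W).mulVec (q - p₀)| ≤ Ksum (W - V₀) * ‖q - y‖ * ‖q - p₀‖ := by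
    have hVW : V₀ - W = -(W - V₀) := by abel
    rw [hVW, ← Ksum_neg (W - V₀)]
    exact abs_dot_le _ _ _
  have hcd := hcoer (q - p₀)
  rw [pow_two] at hcd
  have hqy : ‖q - y‖ = ‖y - q‖ := by rw [← norm_neg]; congr 1; abel
  have hmain : c * (‖q - p₀‖ * ‖q - p₀‖) ≤
      C₀ * ‖y - x₀‖ * ‖q - p₀‖ + Ksum (W - V₀) * S₀ * ‖q - p₀‖ := by
    have habs4 := (abs_le.1 hb4).2
    have habs5 := (abs_le.1 hb5).2
    have h1 : quadForm V₀ (q - p₀) ≤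
        (y - x₀) ⬝ᵥ V₀.mulVec (q - p₀) + (q - y) ⬝ᵥ (V₀ - W).mulVec (q - p₀) := by
      rw [hid]; linarith
    have h2 : Ksum (W - V₀) * ‖q - y‖ * ‖q - p₀‖ ≤ Ksum (W - V₀) * S₀ * ‖q - p₀‖ := by
      rw [hqy]
      exact mul_le_mul_of_nonneg_right (mul_le_mul_of_nonneg_left hyq hKW) (norm_nonneg _)
    linarith
  -- conclude
  rw [dist_eq_norm]
  show ‖q - p₀‖ < ε
  rcases eq_or_lt_of_le (norm_nonneg (q - p₀)) with h0 | hdpos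
  · rw [← h0]; exact hε
  · exact abstract_final c ε C₀ S₀ (Ksum (W - V₀)) ‖y - x₀‖ ‖q - p₀‖ hc hε hC₀ hS₀ hKW
      hdpos (norm_nonneg _) hmain (lt_of_lt_of_le hz1 (min_le_right _ _))
      (lt_of_lt_of_le hz2 (min_le_right _ _))
end
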